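/- Let E := EuclideanSpace ℝ (Fin 3) and let φ : E → ℝ be cone-smooth, i.e. φ(y) = f(y) + ‖y‖·g(y) for all y with f, g : E → ℝ of class C^∞, and assume φ(0) = 0. Then the function y ↦ ∫₀¹ t⁻¹·φ(t • y) dt is cone-smooth: there exist C^∞ functions f₁, g₁ : E → ℝ with ∫₀¹ t⁻¹·φ(t • y) dt = f₁(y) + ‖y‖·g₁(y) for all y ∈ E. -/

import Mathlib

/-!
Hadamard's lemma writes `f x = A x x` with `A x = ∫₀¹ Df(s • x) ds`, so for `t > 0`
`t⁻¹ φ(t • y) = A(t • y) y + ‖y‖ g(t • y)`. Both terms are radial averages `y ↦ ∫₀¹ k(t • y) dt`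
of smooth `k`, which are smooth by differentiation under the integral sign.
-/

open MeasureTheory Set Filter Topology
open scoped Interval

theorem IsCompact.exists_eventually_forall_norm_le {X Y V : Type*} [TopologicalSpace X]
    [TopologicalSpace Y] [NormedAddCommGroup V] {K : Set Y} (hK : IsCompact K)
    {G : X → Y → V} (hG : Continuous (Function.uncurry G)) (x₀ : X) :
    ∃ M, ∀ᶠ x in 𝓝 x₀, ∀ y ∈ K, ‖G x y‖ ≤ M := by
  obtain ⟨M, hM⟩ := hK.exists_bound_of_continuousOn
    (hG.comp (continuous_const.prodMk continuous_id)).continuousOn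
  refine ⟨M + 1, hK.eventually_forall_of_forall_eventually fun y hy => ?_⟩
  have hlt : ‖G x₀ y‖ < M + 1 := (hM y hy).trans_lt (lt_add_one M)
  exact (hG.norm.continuousAt.eventually (gt_mem_nhds hlt)).mono fun _ hz => hz.le

universe u

section Parametric

variable {H F : Type u} [NormedAddCommGroup H] [NormedSpace ℝ H]
  [NormedAddCommGroup F] [NormedSpace ℝ F]

theorem ContDiff.uncurry_fderiv_left {h : H → ℝ → F} {m : WithTop ℕ∞}
    (hh : ContDiff ℝ (m + 1) (Function.uncurry h)) :
    ContDiff ℝ m (Function.uncurry fun x t => fderiv ℝ (fun x' => h x' t) x) :=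
  (hh.comp (contDiff_snd.prodMk (contDiff_snd.comp contDiff_fst))).fderiv
    (f := fun p : H × ℝ => fun x => h x p.2) contDiff_fst le_rfl

theorem hasFDerivAt_intervalIntegral_of_contDiff {h : H → ℝ → F}
    (hh : ContDiff ℝ 1 (Function.uncurry h)) (a b : ℝ) (x₀ : H) :
    HasFDerivAt (fun x => ∫ t in a..b, h x t)
      (∫ t in a..b, fderiv ℝ (fun x => h x t) x₀) x₀ := by
  have hD := (ContDiff.uncurry_fderiv_left (m := 0) (by simpa using hh)).continuous
  obtain ⟨M, hM⟩ := isCompact_uIcc.exists_eventually_forall_norm_le hD x₀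
  refine intervalIntegral.hasFDerivAt_integral_of_dominated_of_fderiv_le (μ := volume)
    (F' := fun x t => fderiv ℝ (fun x' => h x' t) x) (bound := fun _ => M) hM
    (Eventually.of_forall fun x => ?_) ?_ ?_ ?_ intervalIntegrable_const ?_
  · exact (hh.continuous.comp (continuous_const.prodMk continuous_id)).aestronglyMeasurable
  · exact (hh.continuous.comp (continuous_const.prodMk continuous_id)).intervalIntegrable _ _
  · exact (hD.comp (continuous_const.prodMk continuous_id)).aestronglyMeasurable
  · exact ae_of_all _ fun t ht x hx => hx t (uIoc_subset_uIcc ht)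
  · refine ae_of_all _ fun t _ x _ => ?_
    have hsection : ContDiff ℝ 1 fun x => h x t := hh.comp (contDiff_id.prodMk contDiff_const)
    exact (hsection.differentiable one_ne_zero x).hasFDerivAt

theorem contDiff_intervalIntegral_of_contDiff_nat {h : H → ℝ → F} (a b : ℝ) (n : ℕ)
    (hh : ContDiff ℝ n (Function.uncurry h)) :
    ContDiff ℝ n fun x => ∫ t in a..b, h x t := by
  induction n generalizing F with
  | zero =>
    exact contDiff_zero.2
      (intervalIntegral.continuous_parametric_intervalIntegral_of_continuous' hh.continuous a b)
  | succ m ih =>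
    have hh1 : ContDiff ℝ 1 (Function.uncurry h) := hh.of_le (by exact_mod_cast m.succ_pos)
    push_cast at hh ⊢
    rw [contDiff_succ_iff_fderiv,
      funext fun x => (hasFDerivAt_intervalIntegral_of_contDiff hh1 a b x).fderiv]
    exact ⟨fun x => (hasFDerivAt_intervalIntegral_of_contDiff hh1 a b x).differentiableAt,
      by simp, ih hh.uncurry_fderiv_left⟩

theorem contDiff_intervalIntegral_of_contDiff {h : H → ℝ → F} (a b : ℝ) {n : ℕ∞}
    (hh : ContDiff ℝ n (Function.uncurry h)) :
    ContDiff ℝ n fun x => ∫ t in a..b, h x t :=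
  contDiff_iff_forall_nat_le.2 fun m hm =>
    contDiff_intervalIntegral_of_contDiff_nat a b m (hh.of_le (by exact_mod_cast hm))

theorem ContDiff.intervalIntegral_comp_smul {k : H → F} {n : ℕ∞} (hk : ContDiff ℝ n k)
    (a b : ℝ) : ContDiff ℝ n fun x => ∫ t in a..b, k (t • x) :=
  contDiff_intervalIntegral_of_contDiff a b (hk.comp (contDiff_snd.smul contDiff_fst))

end Parametric

theorem ContDiff.eq_add_intervalIntegral_fderiv_comp_smul {H F : Type*} [NormedAddCommGroup H]
    [NormedSpace ℝ H] [NormedAddCommGroup F] [NormedSpace ℝ F] [CompleteSpace F] {k : H → F}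
    (hk : ContDiff ℝ 1 k) (x : H) :
    k x = k 0 + (∫ t in (0 : ℝ)..1, fderiv ℝ k (t • x)) x := by
  have hcont : Continuous fun t : ℝ => fderiv ℝ k (t • x) :=
    (hk.continuous_fderiv one_ne_zero).comp (continuous_id.smul continuous_const)
  have hderiv (t : ℝ) : HasDerivAt (fun s : ℝ => k (s • x)) (fderiv ℝ k (t • x) x) t :=
    (hk.differentiable one_ne_zero _).hasFDerivAt.comp_hasDerivAt t
      (by simpa using (hasDerivAt_id t).smul_const x)
  rw [ContinuousLinearMap.intervalIntegral_apply (hcont.intervalIntegrable 0 1),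
    intervalIntegral.integral_eq_sub_of_hasDerivAt (fun t _ => hderiv t)
      ((ContinuousLinearMap.apply ℝ F x).continuous.comp hcont |>.intervalIntegrable 0 1)]
  simp

/-- Lemma A.2 (iii), k = ∞: for cone-smooth `φ` with `φ(0) = 0`, the function
`y ↦ ∫₀¹ t⁻¹ φ(t • y) dt` (i.e. `∫₀^r r̂⁻¹ φ dr̂`) is cone-smooth. -/
theorem cone_smooth_radial_log_integral (φ : EuclideanSpace ℝ (Fin 3) → ℝ)
    (f g : EuclideanSpace ℝ (Fin 3) → ℝ)
    (hf : ContDiff ℝ (⊤ : ℕ∞) f) (hg : ContDiff ℝ (⊤ : ℕ∞) g)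
    (hφ : ∀ y : EuclideanSpace ℝ (Fin 3), φ y = f y + ‖y‖ * g y)
    (h0 : φ 0 = 0) :
    ∃ f₁ g₁ : EuclideanSpace ℝ (Fin 3) → ℝ,
      ContDiff ℝ (⊤ : ℕ∞) f₁ ∧ ContDiff ℝ (⊤ : ℕ∞) g₁ ∧
      ∀ y : EuclideanSpace ℝ (Fin 3),
        (∫ t in (0 : ℝ)..1, t⁻¹ * φ (t • y)) = f₁ y + ‖y‖ * g₁ y := by
  have hf0 : f 0 = 0 := by simpa [hφ] using h0
  set A := fun x => ∫ s in (0 : ℝ)..1, fderiv ℝ f (s • x)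
  have hA : ContDiff ℝ (⊤ : ℕ∞) A :=
    (hf.fderiv_right (by rw [ENat.coe_top_add_one])).intervalIntegral_comp_smul 0 1
  have hfA (x) : f x = A x x := by
    have hf1 : ContDiff ℝ 1 f := hf.of_le (by exact_mod_cast le_top)
    simpa [hf0] using hf1.eq_add_intervalIntegral_fderiv_comp_smul x
  refine ⟨fun y => (∫ t in (0 : ℝ)..1, A (t • y)) y, fun y => ∫ t in (0 : ℝ)..1, g (t • y),
    (hA.intervalIntegral_comp_smul 0 1).clm_apply contDiff_id, hg.intervalIntegral_comp_smul 0 1,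
    fun y => ?_⟩
  have hsmul : Continuous fun t : ℝ => t • y := continuous_id.smul continuous_const
  have hintegrand : ∀ t ∈ Ι (0 : ℝ) 1, t⁻¹ * φ (t • y) = A (t • y) y + ‖y‖ * g (t • y) := by
    intro t ht
    have ht0 : 0 < t := (uIoc_of_le (zero_le_one' ℝ) ▸ ht).1
    rw [hφ, hfA, map_smul, norm_smul, Real.norm_of_nonneg ht0.le, smul_eq_mul]
    field_simp
  have hAy : Continuous fun t : ℝ => A (t • y) := hA.continuous.comp hsmul
  have hgy : Continuous fun t : ℝ => ‖y‖ * g (t • y) :=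
    continuous_const.mul (hg.continuous.comp hsmul)
  dsimp only
  rw [intervalIntegral.integral_congr_ae (ae_of_all _ hintegrand),
    intervalIntegral.integral_add ((hAy.clm_apply continuous_const).intervalIntegrable 0 1)
      (hgy.intervalIntegrable 0 1),
    intervalIntegral.integral_const_mul,
    ContinuousLinearMap.intervalIntegral_apply (hAy.intervalIntegrable 0 1)]
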